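/- Let θ satisfy condition (A), let φ be the quotient substitution on B with substitution system (X_φ,σ), and let f : X_φ → ℤ(r) be a map such that for every y ∈ X_φ and every z = z_0z_1z_2… ∈ ℤ(r): f(y) = z if and only if for every k ∈ ℕ the word y[−Σ_{i=0}^{k} z_i r^i , −Σ_{i=0}^{k} z_i r^i + r^{k+1} − 1] is a basic r^{k+1}-block of φ (i.e. equals φ^{k+1}(b) for some letter b ∈ B). Then for every non-integer z ∈ ℤ(r), the fiber f^{−1}(z) contains exactly m(θ) points. -/

import Mathlib

/-!
Condition (A) forces every column `a ↦ θ(a)_h` of `θ` to map each class `S_i` onto a class, so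
the columns permute the `m` classes. The quotient `φ` inherits these permutations through the
class of the last letters of the words a letter `b ∈ B` labels, and for `h ≠ 0` the letter
`φ(b)_h` depends on that class alone. Primitivity makes the permutations act transitively, so
every class occurs along the fixed point of `φ`.

A point `y` of the fiber over `z` is determined by the letters `b_k = y(-s_k)` starting its basic
`r^k`-blocks (`s_k = z_0 + ⋯ + z_{k-1} r^{k-1}`), which satisfy `b_k = φ(b_{k+1})_{z_k}`. When `z`
is not an integer these blocks exhaust `ℤ` and infinitely many digits are nonzero; hence the chain
`(b_k)`, and with it `y`, is determined by the class of `b_0`, and every class arises. So the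
fiber has exactly `m` points.
-/

open Set Topology

/-! ### Ellis semigroup of a dynamical system -/

section Ellis

variable {X : Type*} [TopologicalSpace X]

/-- The Ellis (enveloping) semigroup of a dynamical system `(X, T)`: the closure of
`{T^n : n ∈ ℤ}` in `X → X` with the topology of pointwise convergence. -/
def ellisSemigroup (T : X ≃ₜ X) : Set (X → X) :=
  closure {f : X → X | ∃ n : ℤ, f = ⇑(T.toEquiv ^ n)}

/-- A (left) ideal of the Ellis semigroup. -/
def IsLeftIdealOf (T : X ≃ₜ X) (I : Set (X → X)) : Prop :=
  I.Nonempty ∧ I ⊆ ellisSemigroup T ∧ ∀ p ∈ ellisSemigroup T, ∀ q ∈ I, p ∘ q ∈ I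

/-- A minimal left ideal of the Ellis semigroup. -/
def IsMinimalLeftIdealOf (T : X ≃ₜ X) (I : Set (X → X)) : Prop :=
  IsLeftIdealOf T I ∧ ∀ J, IsLeftIdealOf T J → J ⊆ I → J = I

/-- Two points are proximal iff some element of the Ellis semigroup identifies them. -/
def ProximalIn (T : X ≃ₜ X) (x y : X) : Prop :=
  ∃ p ∈ ellisSemigroup T, p x = p y

end Ellis

/-! ### The shift on bi-infinite sequences and orbit closures -/

section Shift

variable {A : Type*}

/-- The shift map on bi-infinite sequences. -/
def shiftF (A : Type*) : (ℤ → A) → (ℤ → A) := fun x n => x (n + 1)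

/-- The inverse shift map on bi-infinite sequences. -/
def shiftFInv (A : Type*) : (ℤ → A) → (ℤ → A) := fun x n => x (n - 1)

variable [TopologicalSpace A]

/-- The shift-orbit closure of a bi-infinite sequence. -/
def orbitClosure (x : ℤ → A) : Set (ℤ → A) :=
  closure {y | ∃ n : ℤ, y = fun k => x (k + n)}

lemma self_mem_orbitClosure (x : ℤ → A) : x ∈ orbitClosure x :=
  subset_closure ⟨0, by funext k; simp⟩

lemma shiftF_mem_orbitClosure (x : ℤ → A) {y : ℤ → A} (hy : y ∈ orbitClosure x) :
    shiftF A y ∈ orbitClosure x := by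
  have hc : Continuous (shiftF A) := continuous_pi fun n => continuous_apply (n + 1)
  have h1 := image_closure_subset_closure_image
    (s := {y : ℤ → A | ∃ n : ℤ, y = fun k => x (k + n)}) hc (mem_image_of_mem _ hy)
  refine closure_mono ?_ h1
  rintro _ ⟨z, ⟨n, rfl⟩, rfl⟩
  refine ⟨n + 1, ?_⟩
  funext k
  show x (k + 1 + n) = x (k + (n + 1))
  congr 1; ring

lemma shiftFInv_mem_orbitClosure (x : ℤ → A) {y : ℤ → A} (hy : y ∈ orbitClosure x) :
    shiftFInv A y ∈ orbitClosure x := by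
  have hc : Continuous (shiftFInv A) := continuous_pi fun n => continuous_apply (n - 1)
  have h1 := image_closure_subset_closure_image
    (s := {y : ℤ → A | ∃ n : ℤ, y = fun k => x (k + n)}) hc (mem_image_of_mem _ hy)
  refine closure_mono ?_ h1
  rintro _ ⟨z, ⟨n, rfl⟩, rfl⟩
  refine ⟨n - 1, ?_⟩
  funext k
  show x (k - 1 + n) = x (k + (n - 1))
  congr 1; ring

/-- The shift, as a homeomorphism of the orbit closure of `x`. -/
def shiftHomOn (x : ℤ → A) : (orbitClosure x) ≃ₜ (orbitClosure x) where
  toFun y := ⟨shiftF A y.1, shiftF_mem_orbitClosure x y.2⟩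
  invFun y := ⟨shiftFInv A y.1, shiftFInv_mem_orbitClosure x y.2⟩
  left_inv y := by
    apply Subtype.ext; funext k
    show y.1 (k - 1 + 1) = y.1 k
    congr 1; ring
  right_inv y := by
    apply Subtype.ext; funext k
    show y.1 (k + 1 - 1) = y.1 k
    congr 1; ring
  continuous_toFun := Continuous.subtype_mk
    ((continuous_pi fun n => continuous_apply (n + 1)).comp continuous_subtype_val) _
  continuous_invFun := Continuous.subtype_mk
    ((continuous_pi fun n => continuous_apply (n - 1)).comp continuous_subtype_val) _

/-- The set of legal two-letter words of a subshift `Xs`. -/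
def legalPairs (Xs : Set (ℤ → A)) : Set (A × A) :=
  {ab | ∃ y ∈ Xs, ∃ i : ℤ, y i = ab.1 ∧ y (i + 1) = ab.2}

end Shift

/-! ### Substitutions of constant length -/

section Subst

variable {na r : ℕ} [NeZero na] [NeZero r]

/-- `wordIter θ k a j` is the `j`-th letter of the word `θ^k(a)` (of length `r^k`). -/
def wordIter (θ : Fin na → Fin r → Fin na) : ℕ → Fin na → ℕ → Fin na
  | 0, a, _ => a
  | k+1, a, j => wordIter θ k (θ a ⟨(j / r ^ k) % r, Nat.mod_lt _ (NeZero.pos r)⟩) (j % r ^ k)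

/-- A bi-infinite fixed point of the substitution `θ`. -/
def IsSubFix (θ : Fin na → Fin r → Fin na) (x : ℤ → Fin na) : Prop :=
  ∀ (n : ℤ) (m : Fin r), x (r * n + (m : ℕ)) = θ (x n) m

/-- `θ` is admissible: injective on letters and with non-periodic fixed points. -/
def AdmissibleSub (θ : Fin na → Fin r → Fin na) : Prop :=
  Function.Injective θ ∧
  ∀ x : ℤ → Fin na, IsSubFix θ x → ∀ p : ℤ, p ≠ 0 → ∃ k : ℤ, x (k + p) ≠ x k

/-- `θ` is primitive: some power of `θ` maps any letter to a word containing all letters. -/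
def PrimitiveSub (θ : Fin na → Fin r → Fin na) : Prop :=
  ∃ k : ℕ, ∀ a b : Fin na, ∃ j < r ^ k, wordIter θ k a j = b

/-- `θ` is coincidence-free. -/
def CoincidenceFreeSub (θ : Fin na → Fin r → Fin na) : Prop :=
  ∀ a b : Fin na, a ≠ b → ∀ m : Fin r, θ a m ≠ θ b m

/-- `θ` is in canonical form: `θ(a)` begins and ends with `a`. -/
def CanonicalFormSub (θ : Fin na → Fin r → Fin na) : Prop :=
  ∀ a, θ a ⟨0, NeZero.pos r⟩ = a ∧ θ a ⟨r - 1, Nat.sub_lt (NeZero.pos r) one_pos⟩ = a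

/-- `HeightData θ xh d m` : `xh` is a bi-infinite fixed point of `θ` with `xh 0 = 0`,
`d` is the gcd of the set `M = {n ≥ 1 : xh n = 0}` of positive occurrences of `0`,
and `m` is the height `m(θ)`: the largest divisor of `d` coprime to `r`. -/
def HeightData (θ : Fin na → Fin r → Fin na) (xh : ℤ → Fin na) (d m : ℕ) : Prop :=
  IsSubFix θ xh ∧ xh 0 = 0 ∧
  (∀ k : ℕ, 1 ≤ k → xh (k : ℤ) = 0 → d ∣ k) ∧
  (∀ e : ℕ, (∀ k : ℕ, 1 ≤ k → xh (k : ℤ) = 0 → e ∣ k) → e ∣ d) ∧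
  0 < m ∧ m ∣ d ∧ Nat.Coprime m r ∧
  ∀ m' : ℕ, m' ∣ d → Nat.Coprime m' r → m' ∣ m

/-- `z(i) = (min {n : θ(i)_n = 0}) mod m`. -/
noncomputable def subZ (θ : Fin na → Fin r → Fin na) (m : ℕ) (i : Fin na) : ℕ :=
  sInf {n : ℕ | ∃ h : n < r, θ i ⟨n, h⟩ = 0} % m

/-- The class `S_p = {i : z(i) ≡ -p (mod m)}`. -/
def subS (θ : Fin na → Fin r → Fin na) (m : ℕ) (p : ℕ) : Set (Fin na) :=
  {i | Int.ModEq (m : ℤ) (subZ θ m i : ℤ) (-(p : ℤ))}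

/-- The set `P(i,j,k) = {θ^k(p)[j, j+1] : p ∈ S_i}`. -/
def subP (θ : Fin na → Fin r → Fin na) (m : ℕ) (i j k : ℕ) : Set (Fin na × Fin na) :=
  {ab | ∃ p ∈ subS θ m i, ab = (wordIter θ k p j, wordIter θ k p (j + 1))}

/-- The collection of all classes `P(i,j,k)` for `i < m(θ)`, `k ≥ 1`, `0 ≤ j ≤ r^k - 2`. -/
def subClasses (θ : Fin na → Fin r → Fin na) (m : ℕ) : Set (Set (Fin na × Fin na)) :=
  {P | ∃ i < m, ∃ k, 1 ≤ k ∧ ∃ j, j + 2 ≤ r ^ k ∧ P = subP θ m i j k}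

/-- Condition (A): the collection of the `P(i,j,k)` is a partition of the set of legal
two-letter words. -/
def subCondA (θ : Fin na → Fin r → Fin na) (m : ℕ) (Xs : Set (ℤ → Fin na)) : Prop :=
  (∀ C ∈ subClasses θ m, C.Nonempty) ∧
  (⋃₀ subClasses θ m = legalPairs Xs) ∧
  ∀ C ∈ subClasses θ m, ∀ D ∈ subClasses θ m, C = D ∨ Disjoint C D

/-- Data of the quotient substitution `φ` on the alphabet `B = Fin n` of classes:
`c` is the labelling of legal two-letter words by their classes (with the class of words
whose last letter lies in `S_0` labelled `0`), and `φ(b)_0 = b`,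
`φ(b)_h = [θ(a_b)[h-1,h]]` for `1 ≤ h ≤ r-1`, where `a_b` is any last letter of a word
in class `b`. -/
def QuotientSubData {n : ℕ} [NeZero n] (θ : Fin na → Fin r → Fin na) (m : ℕ)
    (Xs : Set (ℤ → Fin na)) (c : Fin na × Fin na → Fin n)
    (φ : Fin n → Fin r → Fin n) : Prop :=
  (∀ b : Fin n, ∃ ab ∈ legalPairs Xs, c ab = b) ∧
  (∀ ab ∈ legalPairs Xs, ∀ cd ∈ legalPairs Xs,
    (c ab = c cd ↔ ∃ C ∈ subClasses θ m, ab ∈ C ∧ cd ∈ C)) ∧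
  (∀ ab ∈ legalPairs Xs, c ab = ⟨0, NeZero.pos n⟩ → ab.2 ∈ subS θ m 0) ∧
  (∀ b : Fin n, φ b ⟨0, NeZero.pos r⟩ = b) ∧
  ∀ b : Fin n, ∀ ab ∈ legalPairs Xs, c ab = b →
    ∀ (h : ℕ) (_ : 1 ≤ h) (hh : h < r),
      φ b ⟨h, hh⟩ = c (θ ab.2 ⟨h - 1, lt_of_le_of_lt (Nat.sub_le h 1) hh⟩, θ ab.2 ⟨h, hh⟩)

/-- The `i`-th column set `C_i = {φ(b)_i : b ∈ B}` of a substitution `φ`. -/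
def colSet {n : ℕ} (φ : Fin n → Fin r → Fin n) (i : ℕ) (hi : i < r) : Set (Fin n) :=
  {b' | ∃ b, φ b ⟨i, hi⟩ = b'}

/-- The number `q` of distinct column sets `C_1, …, C_{r-1}` of `φ`. -/
noncomputable def numColSets {n : ℕ} (φ : Fin n → Fin r → Fin n) : ℕ :=
  {C : Set (Fin n) | ∃ i, ∃ hi : i < r, 1 ≤ i ∧ C = colSet φ i hi}.ncard

/-- The 2-block sliding block code induced by a block map `c`. -/
def PsiMap {A B : Type*} (c : A × A → B) (x : ℤ → A) : ℤ → B :=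
  fun i => c (x (i - 1), x i)

end Subst

/-! ### IP sets and IP cluster points -/

/-- A subset of `ℤ` is an IP set if it is the set of finite sums of a sequence of
distinct integers. -/
def IsIPSet (Q : Set ℤ) : Prop :=
  ∃ g : ℕ → ℤ, Function.Injective g ∧
    Q = {s | ∃ F : Finset ℕ, F.Nonempty ∧ s = ∑ i ∈ F, g i}

/-- `f` is an IP cluster point of the system `(X,T)` along the IP set `P`. -/
def IsIPCP {X : Type*} [TopologicalSpace X] (T : X ≃ₜ X) (f : X → X) (P : Set ℤ) : Prop :=
  ∀ U ∈ nhds f, ∃ Q : Set ℤ, IsIPSet Q ∧ Q ⊆ {k ∈ P | ⇑(T.toEquiv ^ k) ∈ U}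


open Filter

lemma Nat.forall_of_frequently_of_imp_succ {q P : ℕ → Prop} (hq : ∃ᶠ k in atTop, q k)
    (h₁ : ∀ k, q k → P k) (h₀ : ∀ k, ¬ q k → P (k + 1) → P k) (k : ℕ) : P k := by
  obtain ⟨j, hkj, hj⟩ := frequently_atTop.1 hq k
  obtain ⟨d, rfl⟩ := Nat.exists_eq_add_of_le hkj
  induction d generalizing k with
  | zero => exact h₁ k hj
  | succ d ih =>
    by_cases hk : q k
    · exact h₁ k hk
    · exact h₀ k hk (ih (k + 1) (by omega) (by rwa [Nat.add_right_comm, Nat.add_assoc]))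

lemma Nat.exists_next_of_frequently {q : ℕ → Prop} (hq : ∃ᶠ k in atTop, q k) :
    ∃ next : ℕ → ℕ, (∀ k, q (next k)) ∧ (∀ k, q k → next k = k) ∧
      ∀ k, ¬ q k → next k = next (k + 1) := by
  classical
  have hex : ∀ k, ∃ j, k ≤ j ∧ q j := frequently_atTop.1 hq
  have hle : ∀ k, k ≤ Nat.find (hex k) := fun k => (Nat.find_spec (hex k)).1
  have hq' : ∀ k, q (Nat.find (hex k)) := fun k => (Nat.find_spec (hex k)).2
  refine ⟨fun k => Nat.find (hex k), hq', fun k hk => ?_, fun k hk => ?_⟩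
  · exact le_antisymm (Nat.find_min' (hex k) ⟨le_rfl, hk⟩) (hle k)
  · dsimp only
    have hne : Nat.find (hex k) ≠ k := fun he => hk (he ▸ hq' k)
    have := hle k
    have := hle (k + 1)
    exact le_antisymm (Nat.find_min' (hex k) ⟨by omega, hq' (k + 1)⟩)
      (Nat.find_min' (hex (k + 1)) ⟨by omega, hq' k⟩)

lemma mem_orbitClosure_of_forall_exists {A : Type*} [TopologicalSpace A] [DiscreteTopology A]
    {x y : ℤ → A} (H : ∀ M : ℕ, ∃ s : ℤ, ∀ t ∈ Set.Icc (-M : ℤ) M, y t = x (t + s)) :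
    y ∈ orbitClosure x := by
  choose s hs using H
  refine mem_closure_of_tendsto (b := atTop) (f := fun M t => x (t + s M)) ?_
    (Eventually.of_forall fun M => ⟨s M, rfl⟩)
  refine tendsto_pi_nhds.2 fun t => ?_
  rw [nhds_discrete, tendsto_pure]
  filter_upwards [eventually_ge_atTop t.natAbs] with M hM
  exact (hs M t ⟨by omega, by omega⟩).symm

lemma eq_univ_of_forall_mapsTo {r : ℕ} [NeZero r] {α : Type*} [Finite α] (hr : 1 < r)
    (σ : Fin r → Equiv.Perm α) {g : ℕ → α} (hg : Function.Surjective g)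
    (hstep : ∀ p, g p = σ ⟨p % r, Nat.mod_lt _ (NeZero.pos r)⟩ (g (p / r)))
    {s : Set α} (hs : s.Nonempty) (hσ : ∀ h, Set.MapsTo (σ h) s s) : s = Set.univ := by
  have hback : ∀ h i, σ h i ∈ s → i ∈ s := by
    intro h i hi
    obtain ⟨j, hj, hji⟩ := ((s.toFinite.injOn_iff_bijOn_of_mapsTo (hσ h)).1
      (σ h).injective.injOn).surjOn hi
    exact (σ h).injective hji ▸ hj
  have hdiv : ∀ p, p ≠ 0 → p / r < p := fun p hp => Nat.div_lt_self (Nat.pos_of_ne_zero hp) hr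
  have h0 : ∀ p, g p ∈ s → g 0 ∈ s := by
    intro p
    induction p using Nat.strong_induction_on with
    | _ p ih =>
      rcases eq_or_ne p 0 with rfl | hp
      · exact id
      · exact fun hgp => ih _ (hdiv p hp) (hback _ _ (hstep p ▸ hgp))
  have hall : ∀ p, g p ∈ s := by
    intro p
    induction p using Nat.strong_induction_on with
    | _ p ih =>
      rcases eq_or_ne p 0 with rfl | hp
      · obtain ⟨i, hi⟩ := hs
        obtain ⟨q, rfl⟩ := hg i
        exact h0 q hi
      · exact hstep p ▸ hσ _ (ih _ (hdiv p hp))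
  exact Set.eq_univ_of_forall fun i => (hg i).choose_spec ▸ hall _

section Words

variable {n r : ℕ} [NeZero r] {φ : Fin n → Fin r → Fin n}

lemma wordIter_one (φ : Fin n → Fin r → Fin n) (b : Fin n) {j : ℕ} (hj : j < r) :
    wordIter φ 1 b j = φ b ⟨j, hj⟩ := by
  simp [wordIter, Nat.mod_eq_of_lt hj]

lemma wordIter_succ_add_mul (φ : Fin n → Fin r → Fin n) (k : ℕ) (b : Fin n) (e : Fin r)
    {u : ℕ} (hu : u < r ^ k) :
    wordIter φ (k + 1) b (u + e * r ^ k) = wordIter φ k (φ b e) u := by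
  have hk : 0 < r ^ k := pow_pos (NeZero.pos r) k
  simp only [wordIter, Nat.add_mul_div_right _ _ hk, Nat.add_mul_mod_self_right,
    Nat.div_eq_of_lt hu, Nat.mod_eq_of_lt hu, zero_add, Nat.mod_eq_of_lt e.isLt]

lemma wordIter_zero_right (hφ0 : ∀ b, φ b 0 = b) (k : ℕ) (b : Fin n) : wordIter φ k b 0 = b := by
  induction k generalizing b with
  | zero => rfl
  | succ k ih => simpa [wordIter, hφ0] using ih b

lemma IsSubFix.apply_pow_mul_add {x : ℤ → Fin n} (hx : IsSubFix φ x) (k : ℕ) (t : ℤ) {u : ℕ}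
    (hu : u < r ^ k) : x (r ^ k * t + u) = wordIter φ k (x t) u := by
  induction k generalizing t u with
  | zero =>
    obtain rfl : u = 0 := by simpa using hu
    simp [wordIter]
  | succ k ih =>
    have hk : 0 < r ^ k := pow_pos (NeZero.pos r) k
    have hdiv : u / r ^ k < r := by
      rw [Nat.div_lt_iff_lt_mul hk]; rwa [pow_succ, mul_comm] at hu
    have hpos : (r : ℤ) ^ (k + 1) * t + u
        = r ^ k * (r * t + (u / r ^ k : ℕ)) + (u % r ^ k : ℕ) := by
      have := congrArg (Nat.cast : ℕ → ℤ) (Nat.div_add_mod u (r ^ k))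
      push_cast at this ⊢
      linear_combination -this
    rw [hpos, ih _ (Nat.mod_lt _ hk), hx t ⟨u / r ^ k, hdiv⟩]
    simp only [wordIter, Nat.mod_eq_of_lt hdiv]

lemma IsSubFix.exists_natCast_eq {x : ℤ → Fin n} (hx : IsSubFix φ x) (hprim : PrimitiveSub φ)
    (b : Fin n) : ∃ p : ℕ, x p = b := by
  obtain ⟨k, hk⟩ := hprim
  obtain ⟨j, hj, hjb⟩ := hk (x 0) b
  exact ⟨j, by simpa [hjb] using hx.apply_pow_mul_add k 0 hj⟩

end Words

section Digits

variable {r : ℕ} (z : ℕ → Fin r)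

def digitPartialSum (k : ℕ) : ℕ := ∑ i ∈ Finset.range k, (z i : ℕ) * r ^ i

@[simp] lemma digitPartialSum_zero : digitPartialSum z 0 = 0 := rfl

lemma digitPartialSum_succ (k : ℕ) :
    digitPartialSum z (k + 1) = digitPartialSum z k + z k * r ^ k :=
  Finset.sum_range_succ _ _

lemma digitPartialSum_add_rev (k : ℕ) :
    digitPartialSum z k + digitPartialSum (Fin.rev ∘ z) k + 1 = r ^ k := by
  induction k with
  | zero => rfl
  | succ k ih =>
    have hrev : (z k : ℕ) + (Fin.rev (z k) : ℕ) + 1 = r := by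
      have := (z k).isLt; rw [Fin.val_rev]; omega
    simp only [digitPartialSum_succ, Function.comp_apply, pow_succ] at ih ⊢
    calc _ = (digitPartialSum z k + digitPartialSum (Fin.rev ∘ z) k + 1)
          + ((z k : ℕ) + (Fin.rev (z k) : ℕ)) * r ^ k := by ring
      _ = ((z k : ℕ) + (Fin.rev (z k) : ℕ) + 1) * r ^ k := by rw [ih]; ring
      _ = r ^ k * r := by rw [hrev, mul_comm]

lemma digitPartialSum_lt (k : ℕ) : digitPartialSum z k < r ^ k := by
  have := digitPartialSum_add_rev z k; omega

variable {z}

lemma tendsto_digitPartialSum [NeZero r] (hz : ∃ᶠ i in atTop, z i ≠ 0) :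
    Tendsto (digitPartialSum z) atTop atTop := by
  refine tendsto_atTop.2 fun M => ?_
  obtain ⟨i, hMi, hi⟩ := frequently_atTop.1 hz M
  have hi' : 0 < (z i : ℕ) := Nat.pos_of_ne_zero (Fin.val_ne_zero_iff.2 hi)
  have hr : 1 < r := lt_of_le_of_lt hi' (z i).isLt
  filter_upwards [eventually_gt_atTop i] with k hk
  calc M ≤ r ^ i := hMi.trans (Nat.lt_pow_self hr).le
    _ ≤ (z i : ℕ) * r ^ i := Nat.le_mul_of_pos_left _ hi'
    _ ≤ digitPartialSum z k :=
      Finset.single_le_sum (f := fun i => (z i : ℕ) * r ^ i) (fun _ _ => Nat.zero_le _)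
        (Finset.mem_range.2 hk)

variable (z)

/-- Where the basic `r^k`-block of a point of the fiber over `z` sits. -/
def digitWindow (k : ℕ) : Set ℤ :=
  Set.Ico (-(digitPartialSum z k : ℤ)) (-(digitPartialSum z k : ℤ) + (r ^ k : ℕ))

lemma neg_digitPartialSum_mem_digitWindow (k : ℕ) :
    -(digitPartialSum z k : ℤ) ∈ digitWindow z k := by
  have := digitPartialSum_lt z k
  simp only [digitWindow, Set.mem_Ico]; omega

lemma toNat_add_digitPartialSum_lt {k : ℕ} {t : ℤ} (ht : t ∈ digitWindow z k) :
    (t + digitPartialSum z k).toNat < r ^ k := by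
  simp only [digitWindow, Set.mem_Ico] at ht; omega

lemma digitWindow_subset_succ (k : ℕ) : digitWindow z k ⊆ digitWindow z (k + 1) := by
  intro t ht
  have hmul : (z k : ℕ) * r ^ k + r ^ k ≤ r ^ (k + 1) := by
    rw [pow_succ, mul_comm _ r, ← Nat.succ_mul]
    exact Nat.mul_le_mul_right _ (z k).isLt
  have hmul' := Nat.cast_le (α := ℤ) |>.2 hmul
  simp only [digitWindow, Set.mem_Ico, digitPartialSum_succ, Nat.cast_add] at ht hmul' ⊢
  omega

lemma monotone_digitWindow : Monotone (digitWindow z) :=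
  monotone_nat_of_le_succ (digitWindow_subset_succ z)

variable {z}

lemma eventually_mem_digitWindow [NeZero r] (hz0 : ∃ᶠ i in atTop, z i ≠ 0)
    (hzr : ∃ᶠ i in atTop, (z i : ℕ) ≠ r - 1) (t : ℤ) : ∀ᶠ k in atTop, t ∈ digitWindow z k := by
  have hzr' : ∃ᶠ i in atTop, (Fin.rev ∘ z) i ≠ 0 := hzr.mono fun i hi h0 => by
    have := congrArg Fin.val h0
    simp only [Function.comp_apply, Fin.val_rev, Fin.val_zero] at this
    have := (z i).isLt
    omega
  filter_upwards [(tendsto_digitPartialSum hz0).eventually_ge_atTop t.natAbs,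
    (tendsto_digitPartialSum hzr').eventually_ge_atTop t.natAbs] with k h₁ h₂
  have := digitPartialSum_add_rev z k
  simp only [digitWindow, Set.mem_Ico]
  omega

end Digits

section Blocks

variable {n r : ℕ} [NeZero r] {φ : Fin n → Fin r → Fin n} {z : ℕ → Fin r}

def HasBlocksAlong (φ : Fin n → Fin r → Fin n) (z : ℕ → Fin r) (y : ℤ → Fin n) : Prop :=
  ∀ k, ∀ t ∈ digitWindow z k,
    y t = wordIter φ k (y (-digitPartialSum z k)) (t + digitPartialSum z k).toNat

lemma hasBlocksAlong_iff (hφ0 : ∀ b, φ b 0 = b) {y : ℤ → Fin n} :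
    HasBlocksAlong φ z y ↔ ∀ k : ℕ, ∃ b : Fin n, ∀ jj : ℕ, jj < r ^ (k + 1) →
      y ((jj : ℤ) - ∑ i ∈ Finset.range (k + 1), ((z i : ℕ) : ℤ) * (r : ℤ) ^ i)
        = wordIter φ (k + 1) b jj := by
  have hsum : ∀ k, ∑ i ∈ Finset.range k, ((z i : ℕ) : ℤ) * (r : ℤ) ^ i
      = (digitPartialSum z k : ℤ) := by
    intro k; simp [digitPartialSum]
  simp only [hsum]
  constructor
  · intro hy k
    refine ⟨y (-digitPartialSum z (k + 1)), fun j hj => ?_⟩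
    have hmem : (j : ℤ) - digitPartialSum z (k + 1) ∈ digitWindow z (k + 1) := by
      simp only [digitWindow, Set.mem_Ico]; omega
    rw [hy _ _ hmem]
    congr 1
    omega
  · intro hy k t ht
    cases k with
    | zero =>
      simp only [digitWindow, Set.mem_Ico, digitPartialSum_zero] at ht
      obtain rfl : t = 0 := by simp only [pow_zero, Nat.cast_one, Nat.cast_zero] at ht; omega
      rfl
    | succ k =>
      obtain ⟨b, hb⟩ := hy k
      have hb0 : y (-digitPartialSum z (k + 1)) = b := by
        simpa [wordIter_zero_right hφ0] using hb 0 (pow_pos (NeZero.pos r) _)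
      have hnn : 0 ≤ t + digitPartialSum z (k + 1) := by
        simp only [digitWindow, Set.mem_Ico] at ht; omega
      have := hb _ (toNat_add_digitPartialSum_lt z ht)
      rw [Int.toNat_of_nonneg hnn, add_sub_cancel_right] at this
      rw [hb0, this]

lemma HasBlocksAlong.chain (hφ0 : ∀ b, φ b 0 = b) {y : ℤ → Fin n} (hy : HasBlocksAlong φ z y)
    (k : ℕ) : y (-digitPartialSum z k) = φ (y (-digitPartialSum z (k + 1))) (z k) := by
  have hpos : -(digitPartialSum z k : ℤ) + digitPartialSum z (k + 1) = (z k * r ^ k : ℕ) := by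
    rw [digitPartialSum_succ]; push_cast; ring
  rw [hy (k + 1) _ (digitWindow_subset_succ z k (neg_digitPartialSum_mem_digitWindow z k)), hpos,
    Int.toNat_natCast, ← zero_add (z k * r ^ k : ℕ),
    wordIter_succ_add_mul _ _ _ _ (pow_pos (NeZero.pos r) k), wordIter_zero_right hφ0]

lemma HasBlocksAlong.ext {y y' : ℤ → Fin n} (hy : HasBlocksAlong φ z y)
    (hy' : HasBlocksAlong φ z y') (hcover : ∀ t, ∃ k, t ∈ digitWindow z k)
    (h : ∀ k, y (-digitPartialSum z k) = y' (-digitPartialSum z k)) : y = y' := by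
  funext t
  obtain ⟨k, hk⟩ := hcover t
  rw [hy k t hk, hy' k t hk, h k]

lemma exists_eq_wordIter_of_chain (hcover : ∀ t, ∃ k, t ∈ digitWindow z k) {b : ℕ → Fin n}
    (hb : ∀ k, b k = φ (b (k + 1)) (z k)) :
    ∃ y : ℤ → Fin n, ∀ k, ∀ t ∈ digitWindow z k,
      y t = wordIter φ k (b k) (t + digitPartialSum z k).toNat := by
  have hcons : ∀ t k k', k ≤ k' → t ∈ digitWindow z k →
      wordIter φ k' (b k') (t + digitPartialSum z k').toNat
        = wordIter φ k (b k) (t + digitPartialSum z k).toNat := by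
    intro t k k' hkk' ht
    induction k', hkk' using Nat.le_induction with
    | base => rfl
    | succ k' hkk' ih =>
      have ht' := monotone_digitWindow z hkk' ht
      have hsplit : (t + digitPartialSum z (k' + 1)).toNat
          = (t + digitPartialSum z k').toNat + z k' * r ^ k' := by
        simp only [digitWindow, Set.mem_Ico] at ht'
        rw [digitPartialSum_succ, Nat.cast_add]; omega
      rw [hsplit, wordIter_succ_add_mul _ _ _ _ (toNat_add_digitPartialSum_lt z ht'), ← hb, ih]
  choose K hK using hcover
  refine ⟨fun t => wordIter φ (K t) (b (K t)) (t + digitPartialSum z (K t)).toNat,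
    fun k t ht => ?_⟩
  dsimp only
  rw [← hcons t (K t) (max k (K t)) (le_max_right _ _) (hK t),
    hcons t k (max k (K t)) (le_max_left _ _) ht]

end Blocks

/-- For `θ`, `cls a` is the `i` with `a ∈ S_i`, and `perm h` is the permutation of the classes
induced by the column `a ↦ θ(a)_h`. -/
structure ColumnFactor {n r : ℕ} (φ : Fin n → Fin r → Fin n) (α : Type*) where
  cls : Fin n → α
  perm : Fin r → Equiv.Perm α
  cls_apply (b : Fin n) (h : Fin r) : cls (φ b h) = perm h (cls b)

namespace ColumnFactor

variable {na n r : ℕ} {θ : Fin na → Fin r → Fin na} {φ : Fin n → Fin r → Fin n} {α : Type*}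

def Determines [NeZero r] (F : ColumnFactor φ α) : Prop :=
  ∀ h : Fin r, h ≠ 0 → ∀ b b', F.cls b = F.cls b' → φ b h = φ b' h

lemma exists_of_cls_apply_eq_iff (cls : Fin n → α) (hcls : Function.Surjective cls)
    (hcol : ∀ (h : Fin r) (b b' : Fin n), cls (φ b h) = cls (φ b' h) ↔ cls b = cls b') :
    ∃ F : ColumnFactor φ α, F.cls = cls := by
  have := Finite.of_surjective cls hcls
  let σ : Fin r → α → α := fun h i => cls (φ (Function.surjInv hcls i) h)
  have hσ : ∀ h b, σ h (cls b) = cls (φ b h) := fun h b =>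
    (hcol h _ _).2 (Function.surjInv_eq hcls _)
  have hinj : ∀ h, Function.Injective (σ h) := fun h i i' hii' => by
    rwa [hcol, Function.surjInv_eq hcls, Function.surjInv_eq hcls] at hii'
  exact ⟨⟨cls, fun h => Equiv.ofBijective (σ h) (Finite.injective_iff_bijective.1 (hinj h)),
    fun b h => (hσ h b).symm⟩, rfl⟩

lemma perm_zero [NeZero r] (F : ColumnFactor φ α) (hφ0 : ∀ b, φ b 0 = b)
    (hF : Function.Surjective F.cls) : F.perm 0 = 1 := by
  ext i
  obtain ⟨b, rfl⟩ := hF i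
  rw [← F.cls_apply, hφ0, Equiv.Perm.one_apply]

lemma mapsTo_range (F : ColumnFactor φ α) {y : ℤ → Fin n} (hy : IsSubFix φ y) (h : Fin r) :
    Set.MapsTo (F.perm h) (Set.range (F.cls ∘ y)) (Set.range (F.cls ∘ y)) := by
  rintro _ ⟨t, rfl⟩
  exact ⟨r * t + h, by simp [hy t h, F.cls_apply]⟩

lemma cls_apply_natCast [NeZero r] (F : ColumnFactor θ α) {x : ℤ → Fin na} (hx : IsSubFix θ x)
    (p : ℕ) :
    F.cls (x p) = F.perm ⟨p % r, Nat.mod_lt _ (NeZero.pos r)⟩ (F.cls (x (p / r : ℕ))) := by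
  rw [← F.cls_apply, ← hx]
  congr 2
  exact_mod_cast (Nat.div_add_mod p r).symm

lemma surjective_comp_of_perm_eq [NeZero r] [Finite α] (hr : 1 < r) (F : ColumnFactor θ α)
    (G : ColumnFactor φ α) (hFG : G.perm = F.perm) {x : ℤ → Fin na} (hx : IsSubFix θ x)
    (hF : Function.Surjective F.cls) (hxocc : ∀ a, ∃ p : ℕ, x p = a) {y : ℤ → Fin n}
    (hy : IsSubFix φ y) : Function.Surjective (G.cls ∘ y) := by
  refine Set.range_eq_univ.1 <| eq_univ_of_forall_mapsTo hr F.perm (hF.comp hxocc)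
    (F.cls_apply_natCast hx) ⟨_, 0, rfl⟩ fun h => ?_
  rw [← hFG]
  exact G.mapsTo_range hy h

variable [NeZero r] {z : ℕ → Fin r} (F : ColumnFactor φ α)

lemma eq_of_chain_of_cls_eq (hF : F.Determines) (hφ0 : ∀ b, φ b 0 = b)
    (hz0 : ∃ᶠ k in atTop, z k ≠ 0) {b b' : ℕ → Fin n} (hb : ∀ k, b k = φ (b (k + 1)) (z k))
    (hb' : ∀ k, b' k = φ (b' (k + 1)) (z k)) (h0 : F.cls (b 0) = F.cls (b' 0)) : b = b' := by
  have hcls : ∀ k, F.cls (b k) = F.cls (b' k) := by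
    intro k
    induction k with
    | zero => exact h0
    | succ k ih =>
      apply (F.perm (z k)).injective
      rw [← F.cls_apply, ← F.cls_apply, ← hb, ← hb', ih]
  funext k
  refine Nat.forall_of_frequently_of_imp_succ (P := fun k => b k = b' k) hz0
    (fun k hk => ?_) (fun k hk ih => ?_) k
  · rw [hb k, hb' k]
    exact hF _ hk _ _ (hcls _)
  · rw [hb k, hb' k, not_not.1 hk, hφ0, hφ0, ih]

lemma exists_chain (hF : F.Determines) (hφ0 : ∀ b, φ b 0 = b) {y : ℤ → Fin n}
    (hy : IsSubFix φ y) (hsurj : Function.Surjective (F.cls ∘ y))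
    (hz0 : ∃ᶠ k in atTop, z k ≠ 0) (ι : α) :
    ∃ b : ℕ → Fin n, (∀ k, b k = φ (b (k + 1)) (z k)) ∧ F.cls (b 0) = ι ∧
      ∀ k, ∃ t, y t = b k := by
  have hperm0 := F.perm_zero hφ0 hsurj.of_comp
  let w : ℕ → α := fun k => Nat.rec ι (fun k i => (F.perm (z k)).symm i) k
  have hw : ∀ k, F.perm (z k) (w (k + 1)) = w k := fun k => Equiv.apply_symm_apply _ _
  obtain ⟨next, -, hnext_self, hnext_succ⟩ := Nat.exists_next_of_frequently hz0
  let t₀ : α → ℤ := Function.surjInv hsurj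
  -- the chain jumps to the next nonzero digit, where the class `w` pins the letter down
  let b : ℕ → Fin n := fun k => φ (y (t₀ (w (next k + 1)))) (z (next k))
  have hb_succ : ∀ k, z k = 0 → b k = b (k + 1) := fun k hk => by
    simp only [b, hnext_succ k (not_not.2 hk)]
  have hcls : ∀ k, F.cls (b k) = w k := by
    refine Nat.forall_of_frequently_of_imp_succ (P := fun k => F.cls (b k) = w k) hz0
      (fun k hk => ?_) (fun k hk ih => ?_)
    · simp only [b, hnext_self k hk, F.cls_apply]
      rw [← Function.comp_apply (f := F.cls), Function.surjInv_eq hsurj, hw]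
    · rw [not_not] at hk
      rw [hb_succ k hk, ih, ← hw k, hk, hperm0, Equiv.Perm.one_apply]
  refine ⟨b, fun k => ?_, hcls 0, fun k => ⟨r * t₀ (w (next k + 1)) + z (next k), hy _ _⟩⟩
  by_cases hk : z k = 0
  · rw [hb_succ k hk, hk, hφ0]
  · simp only [b, hnext_self k hk]
    refine hF _ hk _ _ ?_
    rw [← Function.comp_apply (f := F.cls), Function.surjInv_eq hsurj, hcls]

theorem ncard_setOf_hasBlocksAlong (hF : F.Determines) (hφ0 : ∀ b, φ b 0 = b) {y₀ : ℤ → Fin n}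
    (hy₀ : IsSubFix φ y₀) (hsurj : Function.Surjective (F.cls ∘ y₀))
    (hz0 : ∃ᶠ k in atTop, z k ≠ 0) (hzr : ∃ᶠ k in atTop, (z k : ℕ) ≠ r - 1) :
    {y : orbitClosure y₀ | HasBlocksAlong φ z y}.ncard = Nat.card α := by
  have hcover : ∀ t, ∃ k, t ∈ digitWindow z k := fun t =>
    (eventually_mem_digitWindow hz0 hzr t).exists
  rw [← Nat.card_coe_set_eq]
  refine Nat.card_eq_of_bijective (fun y => F.cls (y.1.1 0)) ⟨fun y y' hyy => ?_, fun ι => ?_⟩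
  · have hy := y.2
    have hy' := y'.2
    have hchain := F.eq_of_chain_of_cls_eq hF hφ0 hz0 (HasBlocksAlong.chain hφ0 hy)
      (HasBlocksAlong.chain hφ0 hy') (by simpa using hyy)
    exact Subtype.ext <| Subtype.ext <| hy.ext hy' hcover (congrFun hchain)
  · obtain ⟨b, hb, hb0, hocc⟩ := F.exists_chain hF hφ0 hy₀ hsurj hz0 ι
    obtain ⟨y, hy⟩ := exists_eq_wordIter_of_chain hcover hb
    have hyb : ∀ k, y (-digitPartialSum z k) = b k := fun k => by
      rw [hy k _ (neg_digitPartialSum_mem_digitWindow z k), neg_add_cancel, Int.toNat_zero,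
        wordIter_zero_right hφ0]
    have hmem : y ∈ orbitClosure y₀ := by
      refine mem_orbitClosure_of_forall_exists fun M => ?_
      obtain ⟨k, hkM, hkM'⟩ := ((eventually_mem_digitWindow hz0 hzr (-M)).and
        (eventually_mem_digitWindow hz0 hzr M)).exists
      obtain ⟨t₀, ht₀⟩ := hocc k
      refine ⟨r ^ k * t₀ + digitPartialSum z k, fun t ht => ?_⟩
      have htk := Set.ordConnected_Ico.out hkM hkM' ht
      have hnn : 0 ≤ t + digitPartialSum z k := by
        simp only [Set.mem_Ico] at htk; omega
      rw [hy k t htk, ← ht₀, ← hy₀.apply_pow_mul_add k t₀ (toNat_add_digitPartialSum_lt z htk),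
        Int.toNat_of_nonneg hnn]
      congr 1
      ring
    refine ⟨⟨⟨y, hmem⟩, fun k t ht => ?_⟩, ?_⟩
    · show y t = wordIter φ k (y _) _
      rw [hy k t ht, hyb]
    · have hy0 := hyb 0
      simp only [digitPartialSum_zero, Nat.cast_zero, neg_zero] at hy0
      show F.cls (y 0) = ι
      rw [hy0, hb0]

end ColumnFactor

section Height

variable {na r : ℕ} [NeZero na] {θ : Fin na → Fin r → Fin na} {m : ℕ} {Xs : Set (ℤ → Fin na)}

noncomputable def heightClass (θ : Fin na → Fin r → Fin na) (m : ℕ) [NeZero m] (a : Fin na) :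
    Fin m :=
  ⟨((-(subZ θ m a : ℤ)) % m).toNat, by
    have := Int.emod_lt_of_pos (-(subZ θ m a : ℤ)) (Int.natCast_pos.2 (NeZero.pos m))
    have := NeZero.pos m
    omega⟩

lemma mem_subS_iff [NeZero m] {a : Fin na} {i : Fin m} :
    a ∈ subS θ m i ↔ heightClass θ m a = i := by
  have hnn := Int.emod_nonneg (-(subZ θ m a : ℤ)) (Int.natCast_ne_zero.2 (NeZero.ne m))
  change Int.ModEq _ _ _ ↔ _
  rw [← Int.neg_modEq_neg, neg_neg, Int.ModEq,
    Int.emod_eq_of_lt (Int.natCast_nonneg _) (by exact_mod_cast i.isLt), Fin.ext_iff,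
    heightClass]
  dsimp only
  omega

lemma subP_mem_subClasses [NeZero r] (i : Fin m) {j k : ℕ} (hk : 1 ≤ k) (hj : j + 2 ≤ r ^ k) :
    subP θ m i j k ∈ subClasses θ m :=
  ⟨i, i.isLt, k, hk, j, hj, rfl⟩

lemma subCondA.eq_of_mem [NeZero r] (hA : subCondA θ m Xs) {C D : Set (Fin na × Fin na)}
    (hC : C ∈ subClasses θ m) (hD : D ∈ subClasses θ m) {x : Fin na × Fin na} (hxC : x ∈ C)
    (hxD : x ∈ D) : C = D :=
  (hA.2.2 C hC D hD).resolve_right (Set.not_disjoint_iff.2 ⟨x, hxC, hxD⟩)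

lemma heightClass_surjective [NeZero r] [NeZero m] (hA : subCondA θ m Xs) (hr : 2 ≤ r) :
    Function.Surjective (heightClass θ m) := by
  intro i
  obtain ⟨_, p, hp, -⟩ := hA.1 _ (subP_mem_subClasses (θ := θ) i (j := 0) le_rfl (by simpa))
  exact ⟨p, mem_subS_iff.1 hp⟩

lemma image_fst_subP [NeZero r] (i j k : ℕ) :
    Prod.fst '' subP θ m i j k = (fun p => wordIter θ k p j) '' subS θ m i := by
  ext a
  constructor
  · rintro ⟨_, ⟨p, hp, rfl⟩, rfl⟩
    exact ⟨p, hp, rfl⟩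
  · rintro ⟨p, hp, rfl⟩
    exact ⟨_, ⟨p, hp, rfl⟩, rfl⟩

lemma image_column_subS [NeZero r] [NeZero m] (hA : subCondA θ m Xs) (hr : 2 ≤ r)
    (hcan : ∀ a, θ a 0 = a) (p : Fin na) (h : Fin r) :
    (θ · h) '' subS θ m (heightClass θ m p) = subS θ m (heightClass θ m (θ p h)) := by
  have hw : ∀ q {u}, u < r → wordIter θ 2 q (u + h * r) = wordIter θ 1 (θ q h) u :=
    fun q u hu => by simpa using wordIter_succ_add_mul θ 1 q h (u := u) (by simpa using hu)
  have hw₀ : ∀ q, wordIter θ 2 q (h * r) = θ q h := fun q => by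
    simpa [wordIter_one θ _ (NeZero.pos r), hcan] using hw q (NeZero.pos r)
  have hw₁ : ∀ q, wordIter θ 2 q (h * r + 1) = wordIter θ 1 (θ q h) 1 := fun q => by
    rw [add_comm]; exact hw q hr
  -- `P(i, h r, 2)` and `P(i', 0, 1)` share the word `θ(p)_h θ(θ(p)_h)_1`
  have hP : subP θ m (heightClass θ m p) (h * r) 2 = subP θ m (heightClass θ m (θ p h)) 0 1 := by
    refine hA.eq_of_mem (subP_mem_subClasses _ (by norm_num) ?_)
      (subP_mem_subClasses _ le_rfl (by simpa using hr))
      (x := (θ p h, wordIter θ 1 (θ p h) 1)) ⟨p, mem_subS_iff.2 rfl, by rw [hw₀, hw₁]⟩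
      ⟨θ p h, mem_subS_iff.2 rfl, by simp [wordIter_one θ _ (NeZero.pos r), hcan]⟩
    nlinarith [Nat.mul_le_mul_right r (h.isLt : (h : ℕ) + 1 ≤ r)]
  calc (θ · h) '' subS θ m (heightClass θ m p)
      = Prod.fst '' subP θ m (heightClass θ m p) (h * r) 2 := by simp only [image_fst_subP, hw₀]
    _ = subS θ m (heightClass θ m (θ p h)) := by
      simp [hP, image_fst_subP, wordIter_one θ _ (NeZero.pos r), hcan]

lemma heightClass_apply_eq_iff [NeZero r] [NeZero m] (hA : subCondA θ m Xs) (hr : 2 ≤ r)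
    (hcan : ∀ a, θ a 0 = a) (hcf : CoincidenceFreeSub θ) (h : Fin r) (p q : Fin na) :
    heightClass θ m (θ p h) = heightClass θ m (θ q h) ↔ heightClass θ m p = heightClass θ m q := by
  constructor
  · intro hpq
    have hq : θ q h ∈ subS θ m (heightClass θ m (θ p h)) := mem_subS_iff.2 hpq.symm
    rw [← image_column_subS hA hr hcan p h] at hq
    obtain ⟨p', hp', hp'q⟩ := hq
    obtain rfl : p' = q := by_contra fun hne => hcf _ _ hne h hp'q
    exact (mem_subS_iff.1 hp').symm
  · intro hpq
    have hq : θ q h ∈ (θ · h) '' subS θ m (heightClass θ m p) := ⟨q, mem_subS_iff.2 hpq.symm, rfl⟩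
    rw [image_column_subS hA hr hcan p h] at hq
    exact (mem_subS_iff.1 hq).symm

end Height

section Quotient

variable {na r n : ℕ} [NeZero r] {θ : Fin na → Fin r → Fin na} {m : ℕ} {Xs : Set (ℤ → Fin na)}

/-- The two-letter word `θ(a)[h-1, h]`. -/
def columnPair (θ : Fin na → Fin r → Fin na) (a : Fin na) (h : Fin r) : Fin na × Fin na :=
  (θ a ⟨h - 1, by omega⟩, θ a h)

lemma columnPair_mem_legalPairs {x : ℤ → Fin na} (hx : IsSubFix θ x)
    (hxocc : ∀ a, ∃ p : ℕ, x p = a) (a : Fin na) {h : Fin r} (hh : h ≠ 0) :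
    columnPair θ a h ∈ legalPairs (orbitClosure x) := by
  have h1 := Fin.val_ne_zero_iff.2 hh
  obtain ⟨p, rfl⟩ := hxocc a
  refine ⟨x, self_mem_orbitClosure x, r * p + (h - 1 : ℕ), hx p ⟨h - 1, by omega⟩, ?_⟩
  show x _ = θ (x p) h
  rw [← hx p h]
  congr 1
  push_cast [Nat.cast_sub (Nat.one_le_iff_ne_zero.2 h1)]
  ring

lemma columnPair_mem_subP [NeZero na] [NeZero m] {a : Fin na} {i : Fin m}
    (ha : heightClass θ m a = i) {h : Fin r} (hh : h ≠ 0) :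
    columnPair θ a h ∈ subP θ m i (h - 1) 1 := by
  have h1 := Fin.val_ne_zero_iff.2 hh
  refine ⟨a, mem_subS_iff.2 ha, ?_⟩
  rw [wordIter_one θ a (by omega), Nat.sub_add_cancel (Nat.one_le_iff_ne_zero.2 h1),
    wordIter_one θ a h.isLt]
  rfl

lemma label_columnPair_eq_iff [NeZero na] [NeZero m] (hA : subCondA θ m Xs)
    (hcf : CoincidenceFreeSub θ)
    {c : Fin na × Fin na → Fin n} (hc : ∀ ab ∈ legalPairs Xs, ∀ cd ∈ legalPairs Xs,
      (c ab = c cd ↔ ∃ C ∈ subClasses θ m, ab ∈ C ∧ cd ∈ C))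
    {h : Fin r} (hh : h ≠ 0) (hlegal : ∀ a, columnPair θ a h ∈ legalPairs Xs) (a a' : Fin na) :
    c (columnPair θ a h) = c (columnPair θ a' h) ↔ heightClass θ m a = heightClass θ m a' := by
  have hclass : subP θ m (heightClass θ m a) (h - 1) 1 ∈ subClasses θ m :=
    subP_mem_subClasses _ le_rfl <| by
      have := h.isLt; have := Fin.val_ne_zero_iff.2 hh; rw [pow_one]; omega
  rw [hc _ (hlegal a) _ (hlegal a')]
  constructor
  · rintro ⟨C, hC, haC, ha'C⟩
    rw [hA.eq_of_mem hC hclass haC (columnPair_mem_subP rfl hh)] at ha'C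
    obtain ⟨p, hp, hpair⟩ := ha'C
    have hsnd : θ a' h = θ p h := by
      rw [show θ a' h = _ from congrArg Prod.snd hpair,
        Nat.sub_add_cancel (Nat.pos_of_ne_zero (Fin.val_ne_zero_iff.2 hh)), wordIter_one θ p h.isLt]
    obtain rfl : a' = p := by_contra fun hne => hcf _ _ hne h hsnd
    exact (mem_subS_iff.1 hp).symm
  · exact fun haa' => ⟨_, hclass, columnPair_mem_subP rfl hh, columnPair_mem_subP haa'.symm hh⟩

/-- The class of a letter `b ∈ B` is the class of the last letters of the words labelled `b`. -/
lemma exists_quotientFactor [NeZero na] [NeZero m] [NeZero n] (hA : subCondA θ m Xs)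
    (hr : 2 ≤ r) (hcf : CoincidenceFreeSub θ) (hcan : ∀ a, θ a 0 = a)
    {c : Fin na × Fin na → Fin n} {φ : Fin n → Fin r → Fin n} (hq : QuotientSubData θ m Xs c φ)
    (hlegal : ∀ a (h : Fin r), h ≠ 0 → columnPair θ a h ∈ legalPairs Xs)
    (F : ColumnFactor θ (Fin m)) (hF : F.cls = heightClass θ m) :
    ∃ G : ColumnFactor φ (Fin m), G.perm = F.perm ∧ G.Determines := by
  obtain ⟨hq1, hq2, -, hq4, hq5⟩ := hq
  have hlabel := fun {h : Fin r} (hh : h ≠ 0) =>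
    label_columnPair_eq_iff hA hcf hq2 hh (fun a => hlegal a h hh)
  have hφ : ∀ b, ∀ ab ∈ legalPairs Xs, c ab = b → ∀ h : Fin r, h ≠ 0 →
      φ b h = c (columnPair θ ab.2 h) := fun b ab hab hcab h hh =>
    hq5 b ab hab hcab h (Nat.one_le_iff_ne_zero.2 (Fin.val_ne_zero_iff.2 hh)) h.isLt
  have h1 : (⟨1, hr⟩ : Fin r) ≠ 0 := by simp [Fin.ext_iff]
  choose ab hab hcab using hq1
  have hν : ∀ ab' ∈ legalPairs Xs, heightClass θ m (ab (c ab')).2 = heightClass θ m ab'.2 :=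
    fun ab' hab' => (hlabel h1 _ _).1 <| by
      rw [← hφ _ _ (hab _) (hcab _) _ h1, ← hφ _ _ hab' rfl _ h1]
  have hperm0 : F.perm 0 = 1 := F.perm_zero hcan (hF ▸ heightClass_surjective hA hr)
  refine ⟨⟨fun b => heightClass θ m (ab b).2, F.perm, fun b h => ?_⟩, rfl,
    fun h hh b b' hbb' => ?_⟩
  · rcases eq_or_ne h 0 with rfl | hh
    · rw [show φ b 0 = b from hq4 b, hperm0, Equiv.Perm.one_apply]
    · rw [hφ b _ (hab b) (hcab b) h hh, hν _ (hlegal _ h hh), ← hF]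
      exact F.cls_apply _ h
  · rw [hφ b _ (hab b) (hcab b) h hh, hφ b' _ (hab b') (hcab b') h hh]
    exact (hlabel hh _ _).2 hbb'

end Quotient

/-- Elements of the `r`-adic adding machine `ℤ(r)` are digit sequences `ℕ → Fin r`; its integers
are the sequences with a tail of `0`s or a tail of `(r-1)`s. -/
theorem stmt_9_general {na r : ℕ} [NeZero na] [NeZero r] (hr : 2 ≤ r)
    (θ : Fin na → Fin r → Fin na)
    (hprim : PrimitiveSub θ) (hcf : CoincidenceFreeSub θ)
    (hcan : CanonicalFormSub θ)
    (xh : ℤ → Fin na) (d m : ℕ) (hht : HeightData θ xh d m)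
    (hA : subCondA θ m (orbitClosure xh))
    (n : ℕ) [NeZero n] (c : Fin na × Fin na → Fin n) (φ : Fin n → Fin r → Fin n)
    (hq : QuotientSubData θ m (orbitClosure xh) c φ)
    (yφ : ℤ → Fin n) (hyφ : IsSubFix φ yφ)
    (f : ↥(orbitClosure yφ) → (ℕ → Fin r))
    (hf : ∀ (y : ↥(orbitClosure yφ)) (z : ℕ → Fin r),
      f y = z ↔ ∀ k : ℕ, ∃ b : Fin n, ∀ jj : ℕ, jj < r ^ (k + 1) →
        (y : ℤ → Fin n)
            ((jj : ℤ) - ∑ i ∈ Finset.range (k + 1), ((z i : ℕ) : ℤ) * (r : ℤ) ^ i)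
          = wordIter φ (k + 1) b jj) :
    ∀ z : ℕ → Fin r,
      ¬ ((∃ K : ℕ, ∀ i ≥ K, (z i : ℕ) = 0) ∨ (∃ K : ℕ, ∀ i ≥ K, (z i : ℕ) = r - 1)) →
      {y : ↥(orbitClosure yφ) | f y = z}.ncard = m := by
  intro z hz
  obtain ⟨hxh, -, -, -, hm, -⟩ := hht
  have : NeZero m := ⟨hm.ne'⟩
  have hcan₀ : ∀ a, θ a 0 = a := fun a => (hcan a).1
  have hxocc := hxh.exists_natCast_eq hprim
  have hcls := heightClass_surjective hA hr
  obtain ⟨F, hF⟩ := ColumnFactor.exists_of_cls_apply_eq_iff _ hcls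
    fun h p q => heightClass_apply_eq_iff hA hr hcan₀ hcf h p q
  obtain ⟨G, hGF, hG⟩ := exists_quotientFactor hA hr hcf hcan₀ hq
    (fun a _ hh => columnPair_mem_legalPairs hxh hxocc a hh) F hF
  have hsurj := ColumnFactor.surjective_comp_of_perm_eq hr F G hGF hxh (hF ▸ hcls) hxocc hyφ
  simp only [← eventually_atTop, not_or, not_eventually, Fin.val_eq_zero_iff] at hz
  have hφ0 : ∀ b, φ b 0 = b := hq.2.2.2.1
  have hfiber : {y : ↥(orbitClosure yφ) | f y = z} =
      {y : ↥(orbitClosure yφ) | HasBlocksAlong φ z y} :=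
    Set.ext fun y => (hf y z).trans (hasBlocksAlong_iff hφ0).symm
  rw [hfiber, G.ncard_setOf_hasBlocksAlong hG hφ0 hyφ hsurj hz.1 hz.2, Nat.card_fin]

/-- For the map `f : X_φ → ℤ(r)` characterised by basic-block positioning,
every fiber over a non-integer `z ∈ ℤ(r)` contains exactly `m(θ)` points. Here elements of
the `r`-adic adding machine `ℤ(r)` are encoded as digit sequences `ℕ → Fin r`, and the
integers of `ℤ(r)` are exactly the sequences with a tail of `0`s or a tail of `r-1`s. -/
theorem stmt_9 {na r : ℕ} [NeZero na] [NeZero r] (hr : 2 ≤ r)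
    (θ : Fin na → Fin r → Fin na)
    (hadm : AdmissibleSub θ) (hprim : PrimitiveSub θ) (hcf : CoincidenceFreeSub θ)
    (hcan : CanonicalFormSub θ)
    (xh : ℤ → Fin na) (d m : ℕ) (hht : HeightData θ xh d m)
    (hA : subCondA θ m (orbitClosure xh))
    (n : ℕ) [NeZero n] (c : Fin na × Fin na → Fin n) (φ : Fin n → Fin r → Fin n)
    (hq : QuotientSubData θ m (orbitClosure xh) c φ)
    (yφ : ℤ → Fin n) (hyφ : IsSubFix φ yφ)
    (f : ↥(orbitClosure yφ) → (ℕ → Fin r))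
    (hf : ∀ (y : ↥(orbitClosure yφ)) (z : ℕ → Fin r),
      f y = z ↔ ∀ k : ℕ, ∃ b : Fin n, ∀ jj : ℕ, jj < r ^ (k + 1) →
        (y : ℤ → Fin n)
            ((jj : ℤ) - ∑ i ∈ Finset.range (k + 1), ((z i : ℕ) : ℤ) * (r : ℤ) ^ i)
          = wordIter φ (k + 1) b jj) :
    ∀ z : ℕ → Fin r,
      ¬ ((∃ K : ℕ, ∀ i ≥ K, (z i : ℕ) = 0) ∨ (∃ K : ℕ, ∀ i ≥ K, (z i : ℕ) = r - 1)) →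
      {y : ↥(orbitClosure yφ) | f y = z}.ncard = m :=
  stmt_9_general hr θ hprim hcf hcan xh d m hht hA n c φ hq yφ hyφ f hf
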